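/- Let L/K be a finite separable totally ramified extension of local fields of degree n, let v: L* → ℤ/nℤ be the map x ↦ (v_L(x) mod n), and for a sub-K-vector space V of L set s(V) = {v(x) : x ∈ V, x ≠ 0} ⊆ ℤ/nℤ. Then for every sub-K-vector space V of L, the cardinality of s(V) equals dim_K(V). -/

import Mathlib

/-!
Since `v_L(K^*) = nℤ`, nonzero elements whose valuations are pairwise incongruent modulo `n`
keep pairwise distinct valuations after scaling by `K^*`, so by the strict ultrametric
inequality no nontrivial `K`-combination of them vanishes: `|s(V)| ≤ dim V`.

Conversely, let `W ⊆ V` be spanned by one element of each class in `s(V)`. Total ramification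
forces the residue extension to be trivial (otherwise `π^i` and `π^i u`, `i < n`, would be `2n`
independent elements), so an element of `V` can be matched by a `K`-multiple of the
representative of its class up to strictly higher valuation. Being finite-dimensional over the
complete field `K`, `W` is closed, so every `z ∈ V \ W` has a best approximation in `W`, which
this matching would improve. Hence `V = W`, and `dim V = |s(V)|`.
-/

/-- A local field structure on a field `K`: a normalized (surjective) discrete
valuation `v : K* ↠ ℤ`, extended by a junk value at `0`, with respect to which
`K` is complete. -/
structure LocalFieldStruct (K : Type) [Field K] where
  /-- the valuation; its value at `0` is irrelevant -/
  v : K → ℤ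
  v_mul : ∀ x y : K, x ≠ 0 → y ≠ 0 → v (x * y) = v x + v y
  v_add : ∀ x y : K, x ≠ 0 → y ≠ 0 → x + y ≠ 0 → min (v x) (v y) ≤ v (x + y)
  v_surj : ∀ n : ℤ, ∃ x : K, x ≠ 0 ∧ v x = n
  complete : ∀ a : ℕ → K,
      (∀ N : ℤ, ∃ M : ℕ, ∀ m : ℕ, M ≤ m → ∀ n : ℕ, M ≤ n →
        a m = a n ∨ N ≤ v (a m - a n)) →
      ∃ x : K, ∀ N : ℤ, ∃ M : ℕ, ∀ n : ℕ, M ≤ n → a n = x ∨ N ≤ v (a n - x)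

namespace LocalFieldStruct

variable {K L : Type} [Field K] [Field L]

/-- `x` lies in the valuation ring `O_K`. -/
def Integral (w : LocalFieldStruct K) (x : K) : Prop :=
  x = 0 ∨ 0 ≤ w.v x

/-- The residue characteristic of `K` is the prime `p`, i.e. `p` maps to `0`
in the residue field of the valuation ring. -/
def ResidueCharP (w : LocalFieldStruct K) (p : ℕ) : Prop :=
  p.Prime ∧ ((p : K) = 0 ∨ 0 < w.v (p : K))

/-- `K` has mixed characteristic `(0, p)`: `K` has characteristic `0` and its
residue field has characteristic `p > 0`. -/
def MixedChar (w : LocalFieldStruct K) (p : ℕ) : Prop :=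
  CharZero K ∧ p.Prime ∧ 0 < w.v (p : K)

/-- `e` is the ramification index `e_{L/K}`: the valuation of `L` restricted to
`K` is `e` times the valuation of `K`. -/
def IsRamificationIndex (wK : LocalFieldStruct K) (wL : LocalFieldStruct L)
    [Algebra K L] (e : ℕ) : Prop :=
  0 < e ∧ ∀ x : K, x ≠ 0 → wL.v (algebraMap K L x) = (e : ℤ) * wK.v x

/-- `d` is the valuation `d_{L/K}` of the different of `L/K`, characterized by
`Tr_{L/K}(𝔭_L^i) ⊆ O_K ↔ i ≥ -d` for all `i : ℤ`. -/
def IsDifferentVal (wK : LocalFieldStruct K) (wL : LocalFieldStruct L)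
    [Algebra K L] (d : ℤ) : Prop :=
  ∀ i : ℤ,
    (∀ x : L, (x ≠ 0 → i ≤ wL.v x) → wK.Integral (Algebra.trace K L x)) ↔ -d ≤ i

end LocalFieldStruct

/-- `x` is a normal basis generator of `L` over `K`: the Galois conjugates of
`x` form a `K`-basis of `L`. -/
def IsNormalElement (K : Type) [Field K] {L : Type} [Field L] [Algebra K L]
    (x : L) : Prop :=
  LinearIndependent K (fun σ : L ≃ₐ[K] L => σ x) ∧
    Submodule.span K (Set.range fun σ : L ≃ₐ[K] L => σ x) = ⊤

/-- The valuation criterion `VC(L/K)`, for an extension with ramification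
index `e` and different of valuation `d`: every nonzero `x ∈ L` with
`v_L(x) ≡ -d-1 (mod e)` is a normal basis generator of `L` over `K`. -/
def VC (K : Type) [Field K] {L : Type} [Field L] [Algebra K L]
    (wL : LocalFieldStruct L) (e : ℕ) (d : ℤ) : Prop :=
  ∀ x : L, x ≠ 0 → Int.ModEq (e : ℤ) (wL.v x) (-d - 1) → IsNormalElement K x

namespace LocalFieldStruct

section Valuation

variable {K : Type} [Field K] (w : LocalFieldStruct K)

lemma v_one : w.v 1 = 0 := by
  simpa using (w.v_mul 1 1 one_ne_zero one_ne_zero).symm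

lemma v_neg {x : K} (hx : x ≠ 0) : w.v (-x) = w.v x := by
  have h : w.v (-1 : K) = 0 := by
    have := w.v_mul (-1) (-1) (by norm_num) (by norm_num)
    rw [neg_one_mul, neg_neg, v_one] at this
    omega
  rw [← neg_one_mul, w.v_mul _ _ (by norm_num) hx, h, zero_add]

lemma v_inv {x : K} (hx : x ≠ 0) : w.v x⁻¹ = -w.v x := by
  have := w.v_mul x x⁻¹ hx (inv_ne_zero hx)
  rw [mul_inv_cancel₀ hx, v_one] at this
  omega

lemma v_pow {x : K} (hx : x ≠ 0) (i : ℕ) : w.v (x ^ i) = i * w.v x := by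
  induction i with
  | zero => simpa using w.v_one
  | succ k ih =>
    rw [pow_succ, w.v_mul _ _ (pow_ne_zero k hx) hx, ih]
    push_cast
    ring

lemma add_ne_zero_and_v_add_eq_of_lt {x y : K} (hx : x ≠ 0) (hy : y ≠ 0) (h : w.v x < w.v y) :
    x + y ≠ 0 ∧ w.v (x + y) = w.v x := by
  have hxy : x + y ≠ 0 := by
    intro h0
    rw [eq_neg_of_add_eq_zero_right h0, w.v_neg hx] at h
    exact h.false
  refine ⟨hxy, le_antisymm ?_ ?_⟩
  · have := w.v_add (x + y) (-y) hxy (neg_ne_zero.mpr hy) (by simpa using hx)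
    rw [add_neg_cancel_right, w.v_neg hy] at this
    omega
  · have := w.v_add x y hx hy hxy
    omega

lemma add_ne_zero_and_v_add_eq_min {x y : K} (hx : x ≠ 0) (hy : y ≠ 0) (h : w.v x ≠ w.v y) :
    x + y ≠ 0 ∧ w.v (x + y) = min (w.v x) (w.v y) := by
  rcases h.lt_or_gt with h | h
  · rw [min_eq_left h.le]
    exact w.add_ne_zero_and_v_add_eq_of_lt hx hy h
  · rw [min_eq_right h.le, add_comm]
    exact w.add_ne_zero_and_v_add_eq_of_lt hy hx h

lemma sum_ne_zero_and_exists_v_sum_eq {ι : Type*} {s : Finset ι} {f : ι → K}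
    (hs : s.Nonempty) (h0 : ∀ i ∈ s, f i ≠ 0) (hinj : Set.InjOn (fun i => w.v (f i)) s) :
    ∑ j ∈ s, f j ≠ 0 ∧ ∃ i ∈ s, w.v (∑ j ∈ s, f j) = w.v (f i) := by
  classical
  induction s using Finset.cons_induction with
  | empty => exact absurd hs Finset.not_nonempty_empty
  | cons a t ha ih =>
    simp only [Finset.coe_cons, Set.injOn_insert (Finset.mem_coe.not.mpr ha)] at hinj
    simp only [Finset.mem_cons, forall_eq_or_imp] at h0
    rw [Finset.sum_cons]
    rcases t.eq_empty_or_nonempty with rfl | ht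
    · simpa using h0.1
    obtain ⟨hsum0, i, hit, hsumv⟩ := ih ht h0.2 hinj.1
    have hne : w.v (f a) ≠ w.v (∑ j ∈ t, f j) := by
      rw [hsumv]
      exact fun h => hinj.2 ⟨i, hit, h.symm⟩
    obtain ⟨hadd0, haddv⟩ := w.add_ne_zero_and_v_add_eq_min h0.1 hsum0 hne
    rcases min_choice (w.v (f a)) (w.v (∑ j ∈ t, f j)) with h | h
    · exact ⟨hadd0, a, Finset.mem_cons_self a t, haddv.trans h⟩
    · exact ⟨hadd0, i, Finset.mem_cons_of_mem hit, by rw [haddv, h, hsumv]⟩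

lemma eq_zero_of_sum_eq_zero_of_intCast_v_inj {ι : Type*} (n : ℕ) {s : Finset ι} {f : ι → K}
    (hinj : ∀ i ∈ s, ∀ j ∈ s, f i ≠ 0 → f j ≠ 0 →
      ((w.v (f i) : ℤ) : ZMod n) = w.v (f j) → i = j)
    (hsum : ∑ i ∈ s, f i = 0) : ∀ i ∈ s, f i = 0 := by
  classical
  by_contra! h
  obtain ⟨i, his, hi⟩ := h
  set t := s.filter (fun i => f i ≠ 0)
  have ht : ∀ i ∈ t, i ∈ s ∧ f i ≠ 0 := fun i hi => Finset.mem_filter.mp hi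
  obtain ⟨hsum0, -⟩ := w.sum_ne_zero_and_exists_v_sum_eq
    ⟨i, Finset.mem_filter.mpr ⟨his, hi⟩⟩ (fun i hi => (ht i hi).2)
    (fun i hi j hj hij => hinj i (ht i hi).1 j (ht j hj).1 (ht i hi).2 (ht j hj).2
      (congrArg (Int.cast : ℤ → ZMod n) hij))
  exact hsum0 (by rw [Finset.sum_filter_ne_zero, hsum])

end Valuation

section Extension

variable {K L : Type} [Field K] [Field L] [Algebra K L]
  {wK : LocalFieldStruct K} {wL : LocalFieldStruct L} {n : ℕ}

lemma v_smul (htot : IsRamificationIndex wK wL n) {c : K} (hc : c ≠ 0) {x : L} (hx : x ≠ 0) :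
    wL.v (c • x) = n * wK.v c + wL.v x := by
  rw [Algebra.smul_def, wL.v_mul _ _ ((map_ne_zero _).mpr hc) hx, htot.2 c hc]

lemma intCast_v_smul (htot : IsRamificationIndex wK wL n) {c : K} (hc : c ≠ 0) {x : L}
    (hx : x ≠ 0) : ((wL.v (c • x) : ℤ) : ZMod n) = wL.v x := by
  simp [v_smul htot hc hx]

lemma linearIndependent_of_injective_intCast_v (htot : IsRamificationIndex wK wL n)
    {ι : Type*} {f : ι → L} (h0 : ∀ i, f i ≠ 0)
    (hinj : Function.Injective fun i => ((wL.v (f i) : ℤ) : ZMod n)) :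
    LinearIndependent K f := by
  refine linearIndependent_iff'.mpr fun s g hsum => ?_
  have hterm := wL.eq_zero_of_sum_eq_zero_of_intCast_v_inj n (fun i _ j _ hi hj hij => hinj ?_) hsum
  · exact fun i hi => (smul_eq_zero.mp (hterm i hi)).resolve_right (h0 i)
  · rwa [intCast_v_smul htot (left_ne_zero_of_smul hi) (h0 i),
      intCast_v_smul htot (left_ne_zero_of_smul hj) (h0 j)] at hij

section ResidueField

variable {u : L}

lemma intCast_v_add_algebraMap (htot : IsRamificationIndex wK wL n) (hvu : wL.v u = 0)
    (hfar : ∀ c : K, u + algebraMap K L c ≠ 0 ∧ wL.v (u + algebraMap K L c) ≤ 0) (c : K) :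
    ((wL.v (u + algebraMap K L c) : ℤ) : ZMod n) = 0 := by
  by_cases hc : c = 0
  · simp [hc, hvu]
  have hu : u ≠ 0 := by simpa [hc] using (hfar 0).1
  have hc' : algebraMap K L c ≠ 0 := (map_ne_zero _).mpr hc
  have hvc := htot.2 c hc
  rcases lt_or_ge (wK.v c) 0 with hneg | hnonneg
  · have hlt : wL.v (algebraMap K L c) < wL.v u := by rw [hvu, hvc]; nlinarith [htot.1]
    rw [add_comm, (wL.add_ne_zero_and_v_add_eq_of_lt hc' hu hlt).2, hvc]
    simp
  · have hge := wL.v_add u _ hu hc' (hfar c).1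
    rw [hvu, hvc, min_eq_left (by positivity)] at hge
    have : wL.v (u + algebraMap K L c) = 0 := le_antisymm (hfar c).2 hge
    simp [this]

lemma intCast_v_algebraMap_add_smul (htot : IsRamificationIndex wK wL n) (hvu : wL.v u = 0)
    (hfar : ∀ c : K, u + algebraMap K L c ≠ 0 ∧ wL.v (u + algebraMap K L c) ≤ 0)
    {a b : K} (h : algebraMap K L a + b • u ≠ 0) :
    ((wL.v (algebraMap K L a + b • u) : ℤ) : ZMod n) = 0 := by
  by_cases hb : b = 0
  · have ha : a ≠ 0 := by rintro rfl; simp [hb] at h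
    simp [hb, htot.2 a ha]
  have hfac : algebraMap K L a + b • u = b • (u + algebraMap K L (a / b)) := by
    rw [smul_add, Algebra.smul_def b (algebraMap K L _), ← map_mul, mul_div_cancel₀ a hb]
    ring
  rw [hfac, intCast_v_smul htot hb (hfar _).1]
  exact intCast_v_add_algebraMap htot hvu hfar _

lemma eq_zero_of_algebraMap_add_smul_eq_zero
    (hfar : ∀ c : K, u + algebraMap K L c ≠ 0) {a b : K} (h : algebraMap K L a + b • u = 0) :
    a = 0 ∧ b = 0 := by
  have hb : b = 0 := by
    by_contra hb
    apply hfar (a / b)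
    rw [Algebra.smul_def] at h
    rw [map_div₀]
    field_simp [(map_ne_zero (algebraMap K L)).mpr hb]
    linear_combination h
  simpa [hb] using h

/-- With `π` a uniformizer, the terms of a combination of these `2n` elements are
`π ^ i * (a + b • u)`, whose valuations are `i` modulo `n`. -/
lemma linearIndependent_pow_sumElim_pow_mul (htot : IsRamificationIndex wK wL n)
    (hvu : wL.v u = 0)
    (hfar : ∀ c : K, u + algebraMap K L c ≠ 0 ∧ wL.v (u + algebraMap K L c) ≤ 0)
    {π : L} (hπ : π ≠ 0) (hvπ : wL.v π = 1) :
    LinearIndependent K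
      (Sum.elim (fun i : Fin n => π ^ (i : ℕ)) (fun i : Fin n => π ^ (i : ℕ) * u)) := by
  rw [Fintype.linearIndependent_iff]
  intro g hg
  set y : Fin n → L := fun i => algebraMap K L (g (.inl i)) + g (.inr i) • u
  have hsum : ∑ i : Fin n, π ^ (i : ℕ) * y i = 0 := by
    rw [← hg, Fintype.sum_sum_type, ← Finset.sum_add_distrib]
    refine Finset.sum_congr rfl fun i _ => ?_
    simp only [y, Sum.elim_inl, Sum.elim_inr, Algebra.smul_def]
    ring
  have hclass : ∀ i : Fin n, π ^ (i : ℕ) * y i ≠ 0 →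
      ((wL.v (π ^ (i : ℕ) * y i) : ℤ) : ZMod n) = (i : ℕ) := fun i h => by
    have hy := right_ne_zero_of_mul h
    rw [wL.v_mul _ _ (pow_ne_zero _ hπ) hy, wL.v_pow hπ, hvπ, Int.cast_add,
      intCast_v_algebraMap_add_smul htot hvu hfar hy]
    simp
  have hterm := wL.eq_zero_of_sum_eq_zero_of_intCast_v_inj n (s := Finset.univ)
    (fun i _ j _ hi hj hij => Fin.ext ?_) hsum
  · have hy : ∀ i : Fin n, y i = 0 := fun i =>
      (mul_eq_zero.mp (hterm i (Finset.mem_univ i))).resolve_left (pow_ne_zero _ hπ)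
    rintro (i | i)
    · exact (eq_zero_of_algebraMap_add_smul_eq_zero (fun c => (hfar c).1) (hy i)).1
    · exact (eq_zero_of_algebraMap_add_smul_eq_zero (fun c => (hfar c).1) (hy i)).2
  · rw [hclass i hi, hclass j hj, ZMod.natCast_eq_natCast_iff'] at hij
    rwa [Nat.mod_eq_of_lt i.isLt, Nat.mod_eq_of_lt j.isLt] at hij

end ResidueField

/-- A totally ramified extension has trivial residue extension. -/
lemma exists_v_sub_algebraMap_pos [FiniteDimensional K L] (hn : n = Module.finrank K L)
    (htot : IsRamificationIndex wK wL n) {u : L} (hvu : wL.v u = 0) :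
    ∃ c : K, u - algebraMap K L c = 0 ∨ 0 < wL.v (u - algebraMap K L c) := by
  by_contra! hfar
  replace hfar : ∀ c : K, u + algebraMap K L c ≠ 0 ∧ wL.v (u + algebraMap K L c) ≤ 0 :=
    fun c => by simpa using hfar (-c)
  obtain ⟨π, hπ, hvπ⟩ := wL.v_surj 1
  have hcard :=
    (linearIndependent_pow_sumElim_pow_mul htot hvu hfar hπ hvπ).fintype_card_le_finrank
  simp only [Fintype.card_sum, Fintype.card_fin, ← hn] at hcard
  have := htot.1
  omega

lemma exists_v_lt_v_sub_smul [FiniteDimensional K L] (hn : n = Module.finrank K L)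
    (htot : IsRamificationIndex wK wL n) {x y : L} (hx : x ≠ 0) (hy : y ≠ 0)
    (hxy : ((wL.v y : ℤ) : ZMod n) = wL.v x) :
    ∃ c : K, x - c • y = 0 ∨ wL.v x < wL.v (x - c • y) := by
  obtain ⟨k, hk⟩ := (ZMod.intCast_eq_intCast_iff_dvd_sub _ _ _).mp hxy
  obtain ⟨c₀, hc₀, hvc₀⟩ := wK.v_surj k
  have hy' : c₀ • y ≠ 0 := smul_ne_zero hc₀ hy
  have hvy' : wL.v (c₀ • y) = wL.v x := by rw [v_smul htot hc₀ hy, hvc₀]; omega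
  have hvu : wL.v (x / (c₀ • y)) = 0 := by
    rw [div_eq_mul_inv, wL.v_mul _ _ hx (inv_ne_zero hy'), wL.v_inv hy', hvy', add_neg_cancel]
  obtain ⟨c, hc⟩ := exists_v_sub_algebraMap_pos hn htot hvu
  have hfac : x - (c * c₀) • y = (x / (c₀ • y) - algebraMap K L c) * (c₀ • y) := by
    rw [sub_mul, div_mul_cancel₀ x hy', mul_smul, Algebra.smul_def c]
  refine ⟨c * c₀, ?_⟩
  by_cases h0 : x / (c₀ • y) - algebraMap K L c = 0
  · exact .inl (by rw [hfac, h0, zero_mul])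
  · right
    rw [hfac, wL.v_mul _ _ h0 hy', hvy']
    have := hc.resolve_left h0
    omega

end Extension

section Topology

variable {K : Type} [Field K] (w : LocalFieldStruct K) (e : ℕ)

open Classical in
/-- Taking `e = e_{L/K}` on `K` and `e = 1` on `L` makes `L` a normed `K`-space. -/
noncomputable def absVal : AbsoluteValue K ℝ where
  toFun x := if x = 0 then 0 else (2 : ℝ) ^ (-(e * w.v x))
  map_mul' x y := by
    by_cases hx : x = 0
    · simp [hx]
    by_cases hy : y = 0
    · simp [hy]
    simp only [mul_eq_zero, hx, hy, or_self, if_false, w.v_mul x y hx hy,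
      ← zpow_add₀ (two_ne_zero : (2 : ℝ) ≠ 0)]
    ring_nf
  nonneg' x := by split_ifs <;> positivity
  eq_zero' x := by split_ifs with hx <;> simp [hx, zpow_ne_zero]
  add_le' x y := by
    by_cases hx : x = 0
    · simp [hx]
    by_cases hy : y = 0
    · simp [hy]
    split_ifs with hxy
    · positivity
    have hle : ∀ z : K, w.v z ≤ w.v (x + y) →
        (2 : ℝ) ^ (-(e * w.v (x + y))) ≤ 2 ^ (-(e * w.v z)) := fun z hz =>
      zpow_le_zpow_right₀ one_le_two (neg_le_neg (mul_le_mul_of_nonneg_left hz (by positivity)))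
    have hmin := w.v_add x y hx hy hxy
    rcases le_total (w.v x) (w.v y) with h | h
    · exact (hle x (by omega)).trans (le_add_of_nonneg_right (by positivity))
    · exact (hle y (by omega)).trans (le_add_of_nonneg_left (by positivity))

variable {w e}

lemma absVal_apply {x : K} (hx : x ≠ 0) : w.absVal e x = 2 ^ (-(e * w.v x)) := if_neg hx

lemma absVal_lt_zpow_iff (he : 0 < e) (x : K) (N : ℤ) :
    w.absVal e x < 2 ^ (-(e * N)) ↔ x = 0 ∨ N < w.v x := by
  by_cases hx : x = 0
  · simpa [hx, absVal] using zpow_pos two_pos _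
  rw [absVal_apply hx, zpow_lt_zpow_iff_right₀ one_lt_two, neg_lt_neg_iff,
    mul_lt_mul_iff_right₀ (by positivity)]
  simp [hx]

lemma exists_zpow_lt (he : 0 < e) {ε : ℝ} (hε : 0 < ε) :
    ∃ N : ℤ, (2 : ℝ) ^ (-(e * N)) < ε := by
  obtain ⟨m, hm⟩ := exists_pow_lt_of_lt_one hε (by norm_num : (1 : ℝ) / 2 < 1)
  refine ⟨m, lt_of_le_of_lt ?_ hm⟩
  rw [one_div, inv_pow, ← zpow_natCast, ← zpow_neg]
  exact zpow_le_zpow_right₀ one_le_two (by nlinarith)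

lemma completeSpace_absVal (he : 0 < e) :
    letI := (w.absVal e).toNormedField
    CompleteSpace K := by
  let := (w.absVal e).toNormedField
  refine Metric.complete_of_cauchySeq_tendsto fun u hu => ?_
  have hcauchy (N : ℤ) :
      ∃ M : ℕ, ∀ m, M ≤ m → ∀ k, M ≤ k → u m = u k ∨ N ≤ w.v (u m - u k) := by
    obtain ⟨M, hM⟩ := Metric.cauchySeq_iff.mp hu _ (zpow_pos two_pos (-(e * N)))
    refine ⟨M, fun m hm k hk => ?_⟩
    have hdist := hM m hm k hk
    rw [dist_eq_norm] at hdist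
    rcases (absVal_lt_zpow_iff he _ N).mp hdist with h | h
    · exact .inl (sub_eq_zero.mp h)
    · exact .inr h.le
  obtain ⟨x, hx⟩ := w.complete u hcauchy
  refine ⟨x, Metric.tendsto_atTop.mpr fun ε hε => ?_⟩
  obtain ⟨N, hN⟩ := exists_zpow_lt he hε
  obtain ⟨M, hM⟩ := hx (N + 1)
  refine ⟨M, fun k hk => ?_⟩
  rw [dist_eq_norm]
  refine lt_trans ((absVal_lt_zpow_iff he _ N).mpr ?_) hN
  rcases hM k hk with h | h
  · exact .inl (sub_eq_zero.mpr h)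
  · exact .inr (by omega)

variable {L : Type} [Field L] [Algebra K L] {wK : LocalFieldStruct K} {wL : LocalFieldStruct L}
  {n : ℕ}

lemma absVal_algebraMap (htot : IsRamificationIndex wK wL n) (c : K) :
    wL.absVal 1 (algebraMap K L c) = wK.absVal n c := by
  by_cases hc : c = 0
  · simp [hc]
  rw [absVal_apply ((map_ne_zero _).mpr hc), absVal_apply hc, htot.2 c hc, Nat.cast_one,
    one_mul]

/-- `W` is closed, so `z ∉ W` is at positive distance from it. -/
lemma exists_forall_v_sub_le_of_notMem [FiniteDimensional K L]
    (htot : IsRamificationIndex wK wL n) {W : Submodule K L} {z : L} (hz : z ∉ W) :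
    ∃ N : ℤ, ∀ y ∈ W, wL.v (z - y) ≤ N := by
  obtain ⟨t, ht, hvt⟩ := wK.v_surj (-1)
  let : NontriviallyNormedField K :=
    { (wK.absVal n).toNormedField with
      non_trivial := ⟨t, by
        change 1 < wK.absVal n t
        rw [absVal_apply ht, hvt]
        exact one_lt_zpow₀ one_lt_two (by simpa using htot.1)⟩ }
  have := completeSpace_absVal (w := wK) htot.1
  let := (wL.absVal 1).toNormedField
  let : NormedSpace K L := ⟨fun c x => by
    change wL.absVal 1 (c • x) ≤ wK.absVal n c * wL.absVal 1 x
    rw [Algebra.smul_def, map_mul, absVal_algebraMap htot]⟩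
  obtain ⟨ε, hε, hball⟩ :=
    Metric.isOpen_iff.mp W.closed_of_finiteDimensional.isOpen_compl z hz
  obtain ⟨N, hN⟩ := exists_zpow_lt one_pos hε
  refine ⟨N, fun y hy => not_lt.mp fun hlt => hball ?_ hy⟩
  rw [Metric.mem_ball', dist_eq_norm]
  exact lt_trans ((absVal_lt_zpow_iff one_pos _ N).mpr (.inr hlt)) hN

end Topology

/-- Best approximation: if `z ∈ V` were not in `W`, a `y ∈ W` maximizing `v (z - y)` could be
improved by a multiple of an element of `W` in the class of `z - y`. -/
lemma le_of_forall_exists_intCast_v_eq {K L : Type} [Field K] [Field L] [Algebra K L]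
    [FiniteDimensional K L] {wK : LocalFieldStruct K} {wL : LocalFieldStruct L} {n : ℕ}
    (hn : n = Module.finrank K L) (htot : IsRamificationIndex wK wL n) {V W : Submodule K L}
    (hWV : W ≤ V)
    (hrep : ∀ x ∈ V, x ≠ 0 → ∃ y ∈ W, y ≠ 0 ∧ ((wL.v y : ℤ) : ZMod n) = wL.v x) :
    V ≤ W := by
  intro z hzV
  by_contra hzW
  have hsub : ∀ y ∈ W, z - y ≠ 0 := fun y hy h => hzW (sub_eq_zero.mp h ▸ hy)
  obtain ⟨N, hN⟩ := exists_forall_v_sub_le_of_notMem htot hzW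
  obtain ⟨_, ⟨y₀, hy₀, rfl⟩, hmax⟩ := Int.exists_greatest_of_bdd
    (P := fun m => ∃ y ∈ W, wL.v (z - y) = m)
    ⟨N, by rintro _ ⟨y, hy, rfl⟩; exact hN y hy⟩ ⟨_, 0, W.zero_mem, rfl⟩
  obtain ⟨y, hy, hy0, hcl⟩ := hrep (z - y₀) (V.sub_mem hzV (hWV hy₀)) (hsub y₀ hy₀)
  obtain ⟨c, hc⟩ := exists_v_lt_v_sub_smul hn htot (hsub y₀ hy₀) hy0 hcl
  have hmem : y₀ + c • y ∈ W := W.add_mem hy₀ (W.smul_mem c hy)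
  rw [sub_sub] at hc
  rcases hc with h | h
  · exact hsub _ hmem h
  · exact (hmax _ ⟨_, hmem, rfl⟩).not_gt h

end LocalFieldStruct

open LocalFieldStruct in
theorem statement3_general {K L : Type} [Field K] [Field L] [Algebra K L]
    [FiniteDimensional K L]
    (wK : LocalFieldStruct K) (wL : LocalFieldStruct L)
    (n : ℕ) (hn : n = Module.finrank K L)
    (htot : IsRamificationIndex wK wL n)
    (V : Submodule K L) :
    Set.ncard {a : ZMod n | ∃ x ∈ V, x ≠ 0 ∧ ((wL.v x : ℤ) : ZMod n) = a} =
      Module.finrank K V := by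
  classical
  have : NeZero n := ⟨htot.1.ne'⟩
  set S := {a : ZMod n | ∃ x ∈ V, x ≠ 0 ∧ ((wL.v x : ℤ) : ZMod n) = a}
  choose x hxV hx0 hxa using fun a : S => a.2
  have hindep : LinearIndependent K x :=
    linearIndependent_of_injective_intCast_v htot hx0 fun a b h =>
      Subtype.ext (by simpa only [hxa] using h)
  have hWV : Submodule.span K (Set.range x) ≤ V :=
    Submodule.span_le.mpr (Set.range_subset_iff.mpr hxV)
  have hVW : V ≤ Submodule.span K (Set.range x) :=
    le_of_forall_exists_intCast_v_eq hn htot hWV fun z hz hz0 =>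
      ⟨x ⟨_, z, hz, hz0, rfl⟩, Submodule.subset_span (Set.mem_range_self _), hx0 _, hxa _⟩
  rw [le_antisymm hVW hWV, finrank_span_eq_card hindep, ← Nat.card_coe_set_eq,
    Nat.card_eq_fintype_card]

open LocalFieldStruct in
/-- **Lemma (NiceLemma).** Let `L/K` be a finite separable totally ramified
extension of local fields of degree `n`.  For every sub-`K`-vector space `V`
of `L`, the set `s(V) = {v_L(x) mod n : x ∈ V, x ≠ 0} ⊆ ℤ/nℤ` has cardinality
`dim_K V`. -/
theorem statement3 {K L : Type} [Field K] [Field L] [Algebra K L]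
    [FiniteDimensional K L] [Algebra.IsSeparable K L]
    (wK : LocalFieldStruct K) (wL : LocalFieldStruct L)
    (n : ℕ) (hn : n = Module.finrank K L)
    (htot : IsRamificationIndex wK wL n)
    (V : Submodule K L) :
    Set.ncard {a : ZMod n | ∃ x ∈ V, x ≠ 0 ∧ ((wL.v x : ℤ) : ZMod n) = a} =
      Module.finrank K V :=
  statement3_general wK wL n hn htot V
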